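/- arXiv:1904.12273 — 2 statements merged into one kernel-verified Lean document; each statement's English description precedes it below -/
import Mathlib

section
/- Let $G$ be a graph and let $H$ be the graph obtained from $G$ by subdividing every edge of $G$ exactly once. Let $n=|V(G)|$. Then $H$ has an induced cycle of length at least $2n$ if and only if $G$ has a Hamilton cycle. -/
/-! A cycle of the subdivision alternates between original vertices and subdivision vertices,
so it is the subdivision of a cycle of `G` of half its length; conversely the subdivision of a
cycle is automatically induced, since a subdivision vertex has only its two ends as neighbours.
A cycle of `G` has length at most `n`, with equality exactly for Hamilton cycles. -/

open SimpleGraph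

namespace LOH

variable {V : Type*}

/-- A hole: an induced cycle. -/
def IsInducedCycle (G : SimpleGraph V) {v : V} (c : G.Walk v v) : Prop :=
  c.IsCycle ∧ ∀ x y : V, x ∈ c.support → y ∈ c.support → G.Adj x y → s(x, y) ∈ c.edges

/-- An induced path. -/
def IsInducedPath (G : SimpleGraph V) {u v : V} (p : G.Walk u v) : Prop :=
  p.IsPath ∧ ∀ x y : V, x ∈ p.support → y ∈ p.support → G.Adj x y → s(x, y) ∈ p.edges

/-- A long odd hole: an induced cycle of odd length at least `ℓ`. -/
def IsLongOddHole (G : SimpleGraph V) (ℓ : ℕ) {v : V} (c : G.Walk v v) : Prop :=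
  IsInducedCycle G c ∧ ℓ ≤ c.length ∧ Odd c.length

/-- A shortest long odd hole. -/
def IsShortestLongOddHole (G : SimpleGraph V) (ℓ : ℕ) {v : V} (c : G.Walk v v) : Prop :=
  IsLongOddHole G ℓ c ∧ ∀ (w : V) (d : G.Walk w w), IsLongOddHole G ℓ d → c.length ≤ d.length

/-- The interior of a path: its vertices other than the two ends. -/
def interiorSet {G : SimpleGraph V} {u v : V} (p : G.Walk u v) : Set V :=
  {x | x ∈ p.support ∧ x ≠ u ∧ x ≠ v}

/-- `x` is `C`-major if no three-vertex subpath of `C` contains all neighbours of `x` in `V(C)`. -/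
def CMajor (G : SimpleGraph V) {v : V} (c : G.Walk v v) (x : V) : Prop :=
  x ∉ c.support ∧
    ¬ ∃ a b d : V, s(a, b) ∈ c.edges ∧ s(b, d) ∈ c.edges ∧ a ≠ d ∧
      ∀ y : V, y ∈ c.support → G.Adj x y → y = a ∨ y = b ∨ y = d

/-- A hole is clean if there are no `C`-major vertices. -/
def IsClean (G : SimpleGraph V) {v : V} (c : G.Walk v v) : Prop :=
  ∀ x : V, ¬ CMajor G c x

/-- `p` is a subpath of the closed walk `c`. -/
def IsSubpath (G : SimpleGraph V) {v a b : V} (c : G.Walk v v) (p : G.Walk a b) : Prop :=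
  p.IsPath ∧ (∀ x ∈ p.support, x ∈ c.support) ∧ ∀ e ∈ p.edges, e ∈ c.edges

/-- A long pyramid with apex `v0`, base `{v1,v2,v3}`, formed by `P1,P2,P3`. -/
def IsLongPyramid (G : SimpleGraph V) (ℓ : ℕ) {v0 v1 v2 v3 : V}
    (P1 : G.Walk v0 v1) (P2 : G.Walk v0 v2) (P3 : G.Walk v0 v3) : Prop :=
  P1.IsPath ∧ P2.IsPath ∧ P3.IsPath ∧
  v1 ≠ v0 ∧ v2 ≠ v0 ∧ v3 ≠ v0 ∧
  G.Adj v1 v2 ∧ G.Adj v1 v3 ∧ G.Adj v2 v3 ∧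
  (∀ x : V, x ∈ P1.support → x ∈ P2.support → x = v0) ∧
  (∀ x : V, x ∈ P1.support → x ∈ P3.support → x = v0) ∧
  (∀ x : V, x ∈ P2.support → x ∈ P3.support → x = v0) ∧
  ((ℓ ≤ P1.length ∧ ℓ ≤ P2.length) ∨ (ℓ ≤ P1.length ∧ ℓ ≤ P3.length) ∨
    (ℓ ≤ P2.length ∧ ℓ ≤ P3.length)) ∧
  (∀ x y : V, x ∈ P1.support → x ≠ v0 → y ∈ P2.support → y ≠ v0 → G.Adj x y →
      x = v1 ∧ y = v2) ∧
  (∀ x y : V, x ∈ P1.support → x ≠ v0 → y ∈ P3.support → y ≠ v0 → G.Adj x y →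
      x = v1 ∧ y = v3) ∧
  (∀ x y : V, x ∈ P2.support → x ≠ v0 → y ∈ P3.support → y ≠ v0 → G.Adj x y →
      x = v2 ∧ y = v3)

def HasLongPyramid (G : SimpleGraph V) (ℓ : ℕ) : Prop :=
  ∃ (v0 v1 v2 v3 : V) (P1 : G.Walk v0 v1) (P2 : G.Walk v0 v2) (P3 : G.Walk v0 v3),
    IsLongPyramid G ℓ P1 P2 P3

/-- A long jewel formed by `Q1, Q2, P`. -/
def IsLongJewel (G : SimpleGraph V) (ℓ : ℕ) {u v : V} (Q1 Q2 P : G.Walk u v) : Prop :=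
  Q1.IsPath ∧ Q2.IsPath ∧ P.IsPath ∧
  ¬ (Q1.length % 2 = Q2.length % 2) ∧
  ℓ ≤ P.length ∧
  ∀ x ∈ interiorSet P, ∀ y ∈ interiorSet Q1 ∪ interiorSet Q2, x ≠ y ∧ ¬ G.Adj x y

def HasLongJewelOfOrderLE (G : SimpleGraph V) (ℓ k : ℕ) : Prop :=
  ∃ (u v : V) (Q1 Q2 P : G.Walk u v), IsLongJewel G ℓ Q1 Q2 P ∧
    max (Q1.length + 1) (Q2.length + 1) ≤ k

/-- A candidate: no long pyramid, no long jewel of order at most `ℓ+2`, and no long odd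
hole of length at most `2ℓ+2`. -/
def Candidate (G : SimpleGraph V) (ℓ : ℕ) : Prop :=
  ¬ HasLongPyramid G ℓ ∧ ¬ HasLongJewelOfOrderLE G ℓ (ℓ + 2) ∧
  ¬ ∃ (v : V) (c : G.Walk v v), IsLongOddHole G ℓ c ∧ c.length ≤ 2 * ℓ + 2

/-- A `(u,w)`-gap: a subpath `p` of `c` whose vertex set is the interior of an
induced path of `G` between `u` and `w`. -/
def IsGap (G : SimpleGraph V) {v a b : V} (c : G.Walk v v) (u w : V)
    (p : G.Walk a b) : Prop :=
  IsSubpath G c p ∧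
    ∃ (q : G.Walk u w), IsInducedPath G q ∧ {x : V | x ∈ p.support} = interiorSet q

/-- Two vertex sets are anticomplete: disjoint, with no edges between them. -/
def Anticomplete (G : SimpleGraph V) (A B : Set V) : Prop :=
  Disjoint A B ∧ ∀ a ∈ A, ∀ b ∈ B, ¬ G.Adj a b

/-- Distance between two vertices measured inside the cycle `c`. -/
noncomputable def cycleDist (G : SimpleGraph V) {v : V} (c : G.Walk v v) (a b : V) : ℕ :=
  sInf {n | ∃ (p : G.Walk a b), IsSubpath G c p ∧ p.length = n}

/-- A base `(x, D)` for the hole `c`. -/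
def IsBase (G : SimpleGraph V) {v d1 d2 : V} (c : G.Walk v v) (x : V)
    (D : G.Walk d1 d2) : Prop :=
  CMajor G c x ∧ IsSubpath G c D ∧ G.Adj x d1 ∧ G.Adj x d2 ∧
  (∀ y ∈ interiorSet D, ¬ G.Adj x y) ∧
  (∀ (e1 e2 : V) (D' : G.Walk e1 e2), IsSubpath G c D' →
      (∀ e ∈ D.edges, e ∈ D'.edges) → G.Adj x e1 → G.Adj x e2 →
      (∀ y ∈ interiorSet D', ¬ G.Adj x y) → ∀ e ∈ D'.edges, e ∈ D.edges)

/-- A remote base. -/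
def IsRemoteBase (G : SimpleGraph V) (ℓ : ℕ) {v d1 d2 : V} (c : G.Walk v v) (x : V)
    (D : G.Walk d1 d2) : Prop :=
  IsBase G c x D ∧ 2 * ℓ ≤ D.length ∧
  ∀ y : V, CMajor G c y → y ≠ x → ∀ w ∈ c.support, G.Adj y w →
    ℓ ≤ cycleDist G c w d1 ∧ ℓ ≤ cycleDist G c w d2


/-- The graph obtained from `G` by subdividing every edge exactly once: each
edge `uv` is replaced by a new vertex adjacent exactly to `u` and `v`. -/
def subdivide {V : Type*} (G : SimpleGraph V) : SimpleGraph (V ⊕ G.edgeSet) where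
  Adj x y :=
    match x, y with
    | Sum.inl u, Sum.inr e => u ∈ (e : Sym2 V)
    | Sum.inr e, Sum.inl u => u ∈ (e : Sym2 V)
    | _, _ => False
  symm := ⟨by rintro (u | e) (w | f) h <;> simp_all⟩
  loopless := ⟨by rintro (u | e) h <;> simp_all⟩

lemma _root_.SimpleGraph.Walk.IsCycle.length_le_card [Fintype V] {G : SimpleGraph V} {u : V}
    {p : G.Walk u u} (hp : p.IsCycle) : p.length ≤ Fintype.card V := by
  rw [← Walk.length_tail_add_one hp.not_nil]
  exact hp.isPath_tail.length_lt

section Subdivision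

variable {G : SimpleGraph V}

lemma not_subdivide_adj_inl_inl {u w : V} : ¬ (subdivide G).Adj (.inl u) (.inl w) := id

lemma not_subdivide_adj_inr_inr {e f : G.edgeSet} :
    ¬ (subdivide G).Adj (.inr e) (.inr f) := id

lemma subdivide_adj_inl_edge {u x : V} (h : G.Adj u x) :
    (subdivide G).Adj (.inl u) (.inr ⟨s(u, x), h⟩) := Sym2.mem_mk_left u x

lemma subdivide_adj_edge_inl {u x : V} (h : G.Adj u x) :
    (subdivide G).Adj (.inr ⟨s(u, x), h⟩) (.inl x) := Sym2.mem_mk_right u x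

def subdivideWalk : ∀ {u w : V}, G.Walk u w → (subdivide G).Walk (.inl u) (.inl w)
  | _, _, .nil => .nil
  | _, _, .cons h p =>
    .cons (subdivide_adj_inl_edge h) (.cons (subdivide_adj_edge_inl h) (subdivideWalk p))

@[simp] lemma subdivideWalk_nil {u : V} : subdivideWalk (.nil : G.Walk u u) = .nil := rfl

@[simp] lemma subdivideWalk_cons {u x w : V} (h : G.Adj u x) (p : G.Walk x w) :
    subdivideWalk (.cons h p) =
      .cons (subdivide_adj_inl_edge h) (.cons (subdivide_adj_edge_inl h) (subdivideWalk p)) :=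
  rfl

@[simp] lemma length_subdivideWalk {u w : V} (p : G.Walk u w) :
    (subdivideWalk p).length = 2 * p.length := by
  induction p with
  | nil => rfl
  | cons _ _ ih => simp only [subdivideWalk_cons, Walk.length_cons, ih]; ring

@[simp] lemma inl_mem_support_subdivideWalk {u w x : V} (p : G.Walk u w) :
    .inl x ∈ (subdivideWalk p).support ↔ x ∈ p.support := by
  induction p with
  | nil => simp
  | cons _ _ ih => simp [ih]

@[simp] lemma inr_mem_support_subdivideWalk {u w : V} {f : G.edgeSet} (p : G.Walk u w) :
    .inr f ∈ (subdivideWalk p).support ↔ (f : Sym2 V) ∈ p.edges := by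
  induction p with
  | nil => simp
  | cons h _ ih =>
    simp only [subdivideWalk_cons, Walk.support_cons, List.mem_cons, ih, Walk.edges_cons,
      reduceCtorEq, false_or, Sum.inr.injEq]
    rw [Subtype.ext_iff]

lemma mk_mem_edges_subdivideWalk {u w x : V} {f : G.edgeSet} (p : G.Walk u w)
    (hf : (f : Sym2 V) ∈ p.edges) (hx : x ∈ (f : Sym2 V)) :
    s(.inl x, .inr f) ∈ (subdivideWalk p).edges := by
  induction p with
  | nil => simp at hf
  | cons h p ih =>
    simp only [Walk.edges_cons, List.mem_cons] at hf
    simp only [subdivideWalk_cons, Walk.edges_cons, List.mem_cons]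
    rcases hf with hf | hf
    · obtain rfl : f = ⟨_, h⟩ := Subtype.ext hf
      rcases Sym2.mem_iff.mp hx with rfl | rfl
      · exact .inl rfl
      · exact .inr (.inl Sym2.eq_swap)
    · exact .inr (.inr (ih hf))

lemma isPath_subdivideWalk_iff {u w : V} {p : G.Walk u w} :
    (subdivideWalk p).IsPath ↔ p.IsPath := by
  induction p with
  | nil => simp
  | cons h p ih =>
    simp only [subdivideWalk_cons, Walk.cons_isPath_iff, ih, Walk.support_cons, List.mem_cons,
      inl_mem_support_subdivideWalk, inr_mem_support_subdivideWalk, reduceCtorEq, false_or]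
    exact ⟨fun ⟨⟨hp, _⟩, hu⟩ => ⟨hp, hu⟩,
      fun ⟨hp, hu⟩ => ⟨⟨hp, fun he => hu (p.fst_mem_support_of_mem_edges he)⟩, hu⟩⟩

lemma isCycle_subdivideWalk_iff {u : V} {p : G.Walk u u} :
    (subdivideWalk p).IsCycle ↔ p.IsCycle := by
  cases p with
  | nil => simp
  | cons h p =>
    rw [subdivideWalk_cons, Walk.cons_isCycle_iff, Walk.cons_isPath_iff, Walk.cons_isCycle_iff,
      isPath_subdivideWalk_iff, inr_mem_support_subdivideWalk]
    refine ⟨fun h => h.1, fun hp => ⟨hp, ?_⟩⟩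
    rw [Walk.edges_cons, List.mem_cons, Sym2.eq_swap (a := Sum.inr _), Sym2.congr_left]
    rintro (huv | hmem)
    · exact h.ne (Sum.inl.inj huv)
    · exact hp.2 ((inr_mem_support_subdivideWalk p).mp (Walk.snd_mem_support_of_mem_edges _ hmem))

lemma isInducedCycle_subdivideWalk {u : V} {p : G.Walk u u} (hp : p.IsCycle) :
    IsInducedCycle (subdivide G) (subdivideWalk p) := by
  refine ⟨isCycle_subdivideWalk_iff.mpr hp, ?_⟩
  rintro (x | e) (y | f) hx hy hxy
  · exact absurd hxy not_subdivide_adj_inl_inl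
  · exact mk_mem_edges_subdivideWalk p ((inr_mem_support_subdivideWalk p).mp hy) hxy
  · exact Sym2.eq_swap ▸ mk_mem_edges_subdivideWalk p ((inr_mem_support_subdivideWalk p).mp hx) hxy
  · exact absurd hxy not_subdivide_adj_inr_inr

lemma exists_subdivideWalk_eq_of_isTrail :
    ∀ {u w : V} (p : (subdivide G).Walk (.inl u) (.inl w)), p.IsTrail →
      ∃ q : G.Walk u w, subdivideWalk q = p
  | _, _, .nil, _ => ⟨.nil, rfl⟩
  | _, _, .cons (v := .inl _) h _, _ => h.elim
  | _, _, .cons (v := .inr _) _ (.cons (v := .inr _) h _), _ => h.elim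
  | u, _, .cons (v := .inr e) hue (.cons (v := .inl a) hea p), hp => by
    rw [Walk.isTrail_cons, Walk.isTrail_cons, Walk.edges_cons, List.mem_cons] at hp
    obtain ⟨⟨hp, -⟩, hue_new⟩ := hp
    obtain ⟨q, rfl⟩ := exists_subdivideWalk_eq_of_isTrail p hp
    -- the trail condition forbids turning back along the subdivided edge `e`
    have hua : u ≠ a := by
      rintro rfl
      exact hue_new (.inl Sym2.eq_swap)
    have he : (e : Sym2 V) = s(u, a) := (Sym2.mem_and_mem_iff hua).mp ⟨hue, hea⟩
    have hadj : G.Adj u a := G.mem_edgeSet.mp (he ▸ e.property)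
    obtain rfl : e = ⟨s(u, a), hadj⟩ := Subtype.ext he
    exact ⟨.cons hadj q, rfl⟩

lemma exists_inl_mem_support {x : V ⊕ G.edgeSet} {c : (subdivide G).Walk x x} (hc : ¬ c.Nil) :
    ∃ u : V, .inl u ∈ c.support := by
  cases x with
  | inl u => exact ⟨u, c.start_mem_support⟩
  | inr e =>
    have hadj := c.adj_snd hc
    rcases hsnd : c.snd with u | f
    · exact ⟨u, hsnd ▸ c.getVert_mem_support 1⟩
    · rw [hsnd] at hadj
      exact absurd hadj not_subdivide_adj_inr_inr

end Subdivision

theorem stmt_2 {V : Type*} [Fintype V] [DecidableEq V] (G : SimpleGraph V) :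
    (∃ (v : V ⊕ G.edgeSet) (c : (subdivide G).Walk v v),
        IsInducedCycle (subdivide G) c ∧ 2 * Fintype.card V ≤ c.length) ↔
      ∃ (v : V) (c : G.Walk v v), c.IsHamiltonianCycle := by
  constructor
  · rintro ⟨v, c, ⟨hc, -⟩, hlen⟩
    obtain ⟨u, hu⟩ := exists_inl_mem_support hc.not_nil
    obtain ⟨q, hq⟩ := exists_subdivideWalk_eq_of_isTrail _ (hc.rotate hu).isTrail
    have hq_cycle : q.IsCycle := isCycle_subdivideWalk_iff.mp (hq ▸ hc.rotate hu)
    have hq_length : 2 * q.length = c.length := by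
      rw [← length_subdivideWalk, hq, Walk.length_rotate]
    refine ⟨u, q, Walk.isHamiltonianCycle_iff_isCycle_and_length_eq.mpr ⟨hq_cycle, ?_⟩⟩
    exact le_antisymm hq_cycle.length_le_card (by omega)
  · rintro ⟨v, c, hc⟩
    exact ⟨.inl v, subdivideWalk c, isInducedCycle_subdivideWalk hc.isCycle,
      by rw [length_subdivideWalk, hc.length_eq]⟩

end LOH
end

section
/- Let $\ell\ge 5$, let $G$ be a candidate, let $C$ be a shortest long odd hole in $G$, and let $(x,D)$ be a remote base with $D$ having ends $d_1,d_2$. Let $D'$ be the subpath of $C$ with ends $d_1,d_2$ other than $D$. Then $D'$ has odd length at least $\ell+3$, and $x$ has a neighbour in $V(C)$ that is distinct from and nonadjacent to both $d_1$ and $d_2$. -/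
open SimpleGraph

namespace LOH

variable {V : Type*}

/-!
Let `L` be the length of `D'`. Since `x` is `C`-major, `L ≥ 3`; if `D` were odd, `x` together
with `D` would be a long odd hole shorter than `C`, so `D` is even and `D'` is odd.

The key tool is a jewel on the ends `d1`, `d2`: the long path `D`, the path `d1 - x - d2` of
length `2`, and any odd path from `d1` to `d2` whose interior lies in `D' ∪ {x}`. Applied to `D'`
itself it gives `L ≥ ℓ + 2`; applied to the path along `D'` from `d1` to a neighbour of `x` and
then through `x` to `d2`, it shows that `x` has no neighbour at odd distance `k < ℓ` from `d1`
along `D'`, nor from `d2`. In particular the vertices of `D'` next to `d1` and `d2` are not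
adjacent to `x`, so `x` has a neighbour at distance at least `2` from both ends: otherwise `x`
together with `D'` would be an odd hole shorter than `C`.

Finally, if `L = ℓ + 2` then `ℓ` is odd and the only possible neighbours of `x` inside `D'` are
`D'₂` and `D'_ℓ`. Two consecutive neighbours of `x` among `d1, D'₂, D'_ℓ, d2` bound, together
with `x`, a long odd hole of length at most `ℓ + 4 ≤ 2ℓ + 2`, which a candidate does not have.
-/

section

open Walk

structure SplitsInto (G : SimpleGraph V) {v d1 d2 : V} (c : G.Walk v v) (D D' : G.Walk d1 d2) :
    Prop where
  left : IsSubpath G c D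
  right : IsSubpath G c D'
  disjoint : ∀ e ∈ D'.edges, e ∉ D.edges
  cover : ∀ e, e ∈ c.edges ↔ e ∈ D.edges ∨ e ∈ D'.edges

variable {G : SimpleGraph V} {ℓ : ℕ} {v x d1 d2 : V}

lemma interiorSet_reverse {u w : V} (p : G.Walk u w) : interiorSet p.reverse = interiorSet p := by
  ext y
  simp only [interiorSet, support_reverse, List.mem_reverse, Set.mem_ofPred_eq]
  tauto

lemma _root_.SimpleGraph.Walk.IsPath.eq_of_mem_support_of_append {u w t y : V} {p : G.Walk u w}
    {q : G.Walk w t} (hpq : (p.append q).IsPath) (hp : y ∈ p.support) (hq : y ∈ q.support) :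
    y = w := by
  by_contra h
  exact hpq.ne_of_mem_support_of_append h hp hq rfl

lemma IsInducedPath.of_isSubwalk {a b u w : V} {p : G.Walk a b} {q : G.Walk u w}
    (hpq : p.IsSubwalk q) (hq : IsInducedPath G q) : IsInducedPath G p := by
  refine ⟨isPath_of_isSubwalk hpq hq.1, fun y z hy hz hyz => ?_⟩
  obtain ⟨ru, rv, rfl⟩ := hpq
  have hyq : y ∈ ((ru.append p).append rv).support := by simp [mem_support_append_iff, hy]
  have hzq : z ∈ ((ru.append p).append rv).support := by simp [mem_support_append_iff, hz]
  have hleft := hq.1.of_append_left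
  rcases by simpa [edges_append, or_assoc] using hq.2 y z hyq hzq hyz with h | h | h
  · have hy' := hleft.eq_of_mem_support_of_append (fst_mem_support_of_mem_edges _ h) hy
    have hz' := hleft.eq_of_mem_support_of_append (snd_mem_support_of_mem_edges _ h) hz
    exact absurd (hy'.trans hz'.symm) hyz.ne
  · exact h
  · have hy' := hq.1.eq_of_mem_support_of_append (by simp [mem_support_append_iff, hy])
      (fst_mem_support_of_mem_edges _ h)
    have hz' := hq.1.eq_of_mem_support_of_append (by simp [mem_support_append_iff, hz])
      (snd_mem_support_of_mem_edges _ h)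
    exact absurd (hy'.trans hz'.symm) hyz.ne

lemma IsInducedPath.eq_add_one_or_eq_add_one {u w : V} {p : G.Walk u w} (hp : IsInducedPath G p)
    {i j : ℕ} (hi : i ≤ p.length) (hj : j ≤ p.length) (hij : G.Adj (p.getVert i) (p.getVert j)) :
    j = i + 1 ∨ i = j + 1 := by
  obtain ⟨k, hk, he⟩ := (mk_mem_edges_iff_exists p).mp
    (hp.2 _ _ (getVert_mem_support _ _) (getVert_mem_support _ _) hij)
  have hinj := hp.1.getVert_injOn
  rcases Sym2.eq_iff.mp he with ⟨h1, h2⟩ | ⟨h1, h2⟩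
  · have := hinj (by simp; omega) (by simpa using hi) h1
    have := hinj (by simp; omega) (by simpa using hj) h2
    omega
  · have := hinj (by simp; omega) (by simpa using hj) h1
    have := hinj (by simp; omega) (by simpa using hi) h2
    omega

lemma IsInducedPath.getVert_ne_and_not_adj_ends {u w : V} {A : G.Walk u w}
    (hA : IsInducedPath G A) {k : ℕ} (hk : 2 ≤ k) (hkA : k + 2 ≤ A.length) :
    A.getVert k ≠ u ∧ A.getVert k ≠ w ∧ ¬ G.Adj (A.getVert k) u ∧ ¬ G.Adj (A.getVert k) w := by
  refine ⟨fun h => ?_, fun h => ?_, fun h => ?_, fun h => ?_⟩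
  · have := (hA.1.getVert_eq_start_iff (by omega)).mp h
    omega
  · have := (hA.1.getVert_eq_end_iff (by omega)).mp h
    omega
  · have := hA.eq_add_one_or_eq_add_one (i := k) (j := 0) (by omega) (by omega) (by simpa using h)
    omega
  · have := hA.eq_add_one_or_eq_add_one (i := k) (j := A.length) (by omega) le_rfl
      (by simpa using h)
    omega

lemma IsInducedPath.isInducedCycle_cons_concat {a b : V} {W : G.Walk a b}
    (hW : IsInducedPath G W) (hab : a ≠ b) (hxa : G.Adj x a) (hbx : G.Adj b x)
    (hxW : x ∉ W.support) (hint : ∀ y ∈ interiorSet W, ¬ G.Adj x y) :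
    IsInducedCycle G (cons hxa (W.concat hbx)) := by
  have hapex : ∀ y ∈ W.support, G.Adj x y → s(x, y) ∈ (cons hxa (W.concat hbx)).edges := by
    intro y hy hxy
    by_cases hya : y = a
    · simp [hya]
    by_cases hyb : y = b
    · simp [edges_concat, hyb, Sym2.eq_swap]
    exact absurd hxy (hint y ⟨hy, hya, hyb⟩)
  have hsupp : ∀ y ∈ (cons hxa (W.concat hbx)).support, y = x ∨ y ∈ W.support := by
    simp only [support_cons, support_concat, List.mem_cons, List.mem_append]
    tauto
  refine ⟨(cons_isCycle_iff _ _).mpr ⟨hW.1.concat hxW hbx, ?_⟩, fun y z hy hz hyz => ?_⟩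
  · simp only [edges_concat, List.concat_eq_append, List.mem_append, List.mem_singleton, not_or]
    refine ⟨fun h => hxW (fst_mem_support_of_mem_edges _ h), ?_⟩
    rw [Sym2.eq_iff]
    rintro (⟨rfl, -⟩ | ⟨-, rfl⟩)
    · exact hxW W.end_mem_support
    · exact hab rfl
  rcases hsupp y hy with rfl | hyW <;> rcases hsupp z hz with rfl | hzW
  · exact absurd rfl hyz.ne
  · exact hapex z hzW hyz
  · exact Sym2.eq_swap ▸ hapex y hyW hyz.symm
  · simp [edges_concat, hW.2 y z hyW hzW hyz]

lemma IsInducedPath.exists_isInducedCycle_of_adj_getVert {u w : V} {A : G.Walk u w}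
    (hA : IsInducedPath G A) (hxA : x ∉ A.support) {i j : ℕ} (hij : i < j) (hj : j ≤ A.length)
    (hxi : G.Adj x (A.getVert i)) (hxj : G.Adj x (A.getVert j))
    (hbetween : ∀ k, i < k → k < j → ¬ G.Adj x (A.getVert k)) :
    ∃ H : G.Walk x x, IsInducedCycle G H ∧ H.length = j - i + 2 := by
  set W := (A.drop i).take (j - i)
  have hWA : W.IsSubwalk A := (isSubwalk_take _ _).trans (isSubwalk_drop _ _)
  have hWlen : W.length = j - i := by simp [W]; omega
  have hWget : ∀ k ≤ j - i, W.getVert k = A.getVert (i + k) := by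
    intro k hk
    simp [W, hk]
  have hend : (A.drop i).getVert (j - i) = A.getVert j := by
    rw [drop_getVert, Nat.add_sub_cancel' hij.le]
  have hinj := hA.1.getVert_injOn
  refine ⟨_, (hA.of_isSubwalk hWA).isInducedCycle_cons_concat ?_ hxi (hend ▸ hxj.symm)
    (fun h => hxA (hWA.support_subset h)) ?_, by simp [hWlen]⟩
  · rw [hend]
    intro h
    have := hinj (by simp; omega) (by simpa using hj) h
    omega
  · rintro y ⟨hy, hy0, hy1⟩ hxy
    obtain ⟨k, rfl, hk⟩ := mem_support_iff_exists_getVert.mp hy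
    rw [hWlen] at hk
    have hk0 : k ≠ 0 := fun h => hy0 (by simp [h])
    have hk1 : k ≠ j - i := fun h => hy1 (by simp [h, W])
    exact hbetween (i + k) (by omega) (by omega) (hWget k hk ▸ hxy)

lemma Candidate.exists_adj_getVert_between (hcand : Candidate G ℓ) {u w : V} {A : G.Walk u w}
    (hA : IsInducedPath G A) (hxA : x ∉ A.support) {i j : ℕ} (hij : i < j) (hj : j ≤ A.length)
    (hxi : G.Adj x (A.getVert i)) (hxj : G.Adj x (A.getVert j)) (hodd : Odd (j - i))
    (hlong : ℓ ≤ j - i + 2) (hshort : j - i ≤ 2 * ℓ) :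
    ∃ k, i < k ∧ k < j ∧ G.Adj x (A.getVert k) := by
  by_contra! hnone
  obtain ⟨H, hH, hHlen⟩ := hA.exists_isInducedCycle_of_adj_getVert hxA hij hj hxi hxj hnone
  exact hcand.2.2 ⟨x, H, ⟨hH, by omega, hHlen ▸ hodd.add_even even_two⟩, by omega⟩

lemma HasLongJewelOfOrderLE.mono {k k' : ℕ} (h : HasLongJewelOfOrderLE G ℓ k) (hk : k ≤ k') :
    HasLongJewelOfOrderLE G ℓ k' := by
  obtain ⟨u, w, Q1, Q2, P, hJ, hle⟩ := h
  exact ⟨u, w, Q1, Q2, P, hJ, hle.trans hk⟩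

lemma hasLongJewelOfOrderLE_of_odd {A Q B : G.Walk d1 d2}
    (hQ : Q.IsPath) (hB : B.IsPath) (hx1 : G.Adj x d1) (hx2 : G.Adj x d2)
    (hxB : x ∉ B.support) (hxB' : ∀ y ∈ interiorSet B, ¬ G.Adj x y)
    (hAB : Anticomplete G (interiorSet A) (interiorSet B))
    (hQA : interiorSet Q ⊆ insert x (interiorSet A)) (hlen : ℓ ≤ B.length) (hodd : Odd Q.length) :
    HasLongJewelOfOrderLE G ℓ (max (Q.length + 1) 3) := by
  have hd : d1 ≠ d2 := by
    rintro rfl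
    simp [(isPath_iff_nil.mp hQ).length_eq_zero] at hodd
  set Q2 : G.Walk d1 d2 := cons hx1.symm (cons hx2 nil)
  have hQ2 : Q2.IsPath := by
    simp [Q2, isPath_def, hx1.ne.symm, hx2.ne, hd]
  have hQ2int : interiorSet Q2 = {x} := by
    ext y
    simp only [interiorSet, Q2, support_cons, support_nil, List.mem_cons, List.not_mem_nil,
      or_false, Set.mem_ofPred_eq, Set.mem_singleton_iff]
    constructor
    · rintro ⟨rfl | rfl | rfl, h1, h2⟩ <;> simp_all
    · rintro rfl
      exact ⟨Or.inr (Or.inl rfl), hx1.ne, hx2.ne⟩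
  refine ⟨d1, d2, Q, Q2, B, ⟨hQ, hQ2, hB, ?_, hlen, fun a ha b hb => ?_⟩, ?_⟩
  · simp [Q2, Nat.odd_iff.mp hodd]
  · have hb' : b = x ∨ b ∈ interiorSet A := by
      rw [hQ2int] at hb
      rcases hb with hb | rfl
      · exact hQA hb
      · exact Or.inl rfl
    rcases hb' with rfl | hbA
    · exact ⟨fun h => hxB (h ▸ ha.1), fun h => hxB' a ha h.symm⟩
    · exact ⟨fun h => hAB.1.ne_of_mem hbA ha h.symm, fun h => hAB.2 b hbA a ha h.symm⟩
  · simp [Q2]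

lemma not_adj_getVert_of_odd {k : ℕ} {A B : G.Walk d1 d2}
    (hjewel : ¬ HasLongJewelOfOrderLE G ℓ (ℓ + 2)) (hA : A.IsPath) (hB : B.IsPath)
    (hx1 : G.Adj x d1) (hx2 : G.Adj x d2) (hxA : x ∉ A.support) (hxB : x ∉ B.support)
    (hxB' : ∀ y ∈ interiorSet B, ¬ G.Adj x y) (hAB : Anticomplete G (interiorSet A) (interiorSet B))
    (hlen : ℓ ≤ B.length) (hk : Odd k) (hkℓ : k + 1 ≤ ℓ) (hkA : k < A.length) :
    ¬ G.Adj x (A.getVert k) := by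
  intro hxk
  have hxT : x ∉ (A.take k).support := fun h => hxA ((isSubwalk_take A k).support_subset h)
  have hd2T : d2 ∉ ((A.take k).concat hxk.symm).support := by
    rw [support_concat, List.mem_append, List.mem_singleton, not_or]
    refine ⟨fun h => ?_, hx2.ne.symm⟩
    obtain ⟨i, hi, -⟩ := mem_support_iff_exists_getVert.mp h
    rw [take_getVert] at hi
    have := (hA.getVert_eq_end_iff (by omega)).mp hi
    omega
  set Q := ((A.take k).concat hxk.symm).concat hx2
  have hQ : Q.IsPath := ((hA.take k).concat hxT hxk.symm).concat hd2T hx2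
  have hQlen : Q.length = k + 2 := by simp [Q]; omega
  have hQA : interiorSet Q ⊆ insert x (interiorSet A) := by
    rintro y ⟨hy, hy1, hy2⟩
    simp only [Q, support_concat, List.mem_append, List.mem_singleton] at hy
    rcases hy with (hy | rfl) | rfl
    · exact Or.inr ⟨(isSubwalk_take A k).support_subset hy, hy1, hy2⟩
    · exact Or.inl rfl
    · exact absurd rfl hy2
  apply hjewel
  refine (hasLongJewelOfOrderLE_of_odd hQ hB hx1 hx2 hxB hxB' hAB hQA hlen ?_).mono ?_
  · rw [hQlen]; exact hk.add_even even_two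
  · omega

section Split

variable {c : G.Walk v v} {D D' : G.Walk d1 d2}

lemma SplitsInto.symm (hs : SplitsInto G c D D') : SplitsInto G c D' D :=
  ⟨hs.right, hs.left, fun e he he' => hs.disjoint e he' he, fun e => (hs.cover e).trans or_comm⟩

lemma SplitsInto.length_eq (hs : SplitsInto G c D D') (hc : c.IsTrail) :
    c.length = D.length + D'.length := by
  classical
  have hunion : c.edges.toFinset = D.edges.toFinset ∪ D'.edges.toFinset := by
    ext e
    simp [hs.cover e]
  have hdisj : Disjoint D.edges.toFinset D'.edges.toFinset :=
    Finset.disjoint_right.mpr fun e he he' => hs.disjoint e (by simpa using he) (by simpa using he')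
  have := Finset.card_union_of_disjoint hdisj
  rwa [← hunion, List.toFinset_card_of_nodup hc.edges_nodup,
    List.toFinset_card_of_nodup hs.left.1.edges_nodup,
    List.toFinset_card_of_nodup hs.right.1.edges_nodup, length_edges, length_edges,
    length_edges] at this

lemma SplitsInto.ne (hs : SplitsInto G c D D') (hc : c.IsCycle) : d1 ≠ d2 := by
  rintro rfl
  have := hs.length_eq hc.isTrail
  simp only [(isPath_iff_nil.mp hs.left.1).length_eq_zero,
    (isPath_iff_nil.mp hs.right.1).length_eq_zero] at this
  have := hc.three_le_length
  omega

lemma SplitsInto.mem_or_mem (hs : SplitsInto G c D D') (hc : c.IsCycle) {y : V}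
    (hy : y ∈ c.support) : y ∈ D.support ∨ y ∈ D'.support := by
  obtain ⟨e, he, hye⟩ := (mem_support_iff_exists_mem_edges_of_not_nil hc.not_nil).mp hy
  exact ((hs.cover e).mp he).imp (mem_support_of_mem_edges · hye) (mem_support_of_mem_edges · hye)

lemma SplitsInto.eq_or_eq_of_mem_of_mem (hs : SplitsInto G c D D') (hc : c.IsCycle) {y : V}
    (hy : y ∈ D.support) (hy' : y ∈ D'.support) : y = d1 ∨ y = d2 := by
  classical
  have hcard : c.support.toFinset.card = c.length := by
    have hv : v ∈ c.support.tail.toFinset := List.mem_toFinset.mpr (end_mem_tail_support hc.not_nil)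
    have hlen := c.length_support
    rw [← cons_tail_support] at hlen ⊢
    rw [List.toFinset_cons, Finset.insert_eq_of_mem hv,
      List.toFinset_card_of_nodup hc.support_nodup]
    rw [List.length_cons] at hlen
    omega
  have hunion : D.support.toFinset ∪ D'.support.toFinset = c.support.toFinset := by
    ext z
    simp only [Finset.mem_union, List.mem_toFinset]
    exact ⟨fun h => h.elim (hs.left.2.1 z) (hs.right.2.1 z), hs.mem_or_mem hc⟩
  have hinter := Finset.card_inter_add_card_union D.support.toFinset D'.support.toFinset
  rw [hunion, hcard, List.toFinset_card_of_nodup hs.left.1.support_nodup,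
    List.toFinset_card_of_nodup hs.right.1.support_nodup, length_support, length_support,
    hs.length_eq hc.isTrail] at hinter
  have hends : {d1, d2} ⊆ D.support.toFinset ∩ D'.support.toFinset := by
    simp [Finset.insert_subset_iff]
  have heq := Finset.eq_of_subset_of_card_le hends (by rw [Finset.card_pair (hs.ne hc)]; omega)
  have hmem : y ∈ D.support.toFinset ∩ D'.support.toFinset := by simp [hy, hy']
  simpa [← heq] using hmem

lemma SplitsInto.anticomplete (hs : SplitsInto G c D D') (hc : IsInducedCycle G c) :
    Anticomplete G (interiorSet D) (interiorSet D') := by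
  have hD : ∀ y ∈ interiorSet D, y ∉ D'.support := fun y ⟨hy, h1, h2⟩ hy' =>
    (hs.eq_or_eq_of_mem_of_mem hc.1 hy hy').elim h1 h2
  have hD' : ∀ y ∈ interiorSet D', y ∉ D.support := fun y ⟨hy', h1, h2⟩ hy =>
    (hs.eq_or_eq_of_mem_of_mem hc.1 hy hy').elim h1 h2
  refine ⟨Set.disjoint_left.mpr fun y hy hy' => hD y hy hy'.1, fun a ha b hb hab => ?_⟩
  rcases (hs.cover _).mp (hc.2 a b (hs.left.2.1 a ha.1) (hs.right.2.1 b hb.1) hab) with h | h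
  · exact hD' b hb (snd_mem_support_of_mem_edges _ h)
  · exact hD a ha (fst_mem_support_of_mem_edges _ h)

lemma SplitsInto.isInducedPath (hs : SplitsInto G c D D') (hc : IsInducedCycle G c)
    (hD' : 2 ≤ D'.length) : IsInducedPath G D := by
  refine ⟨hs.left.1, fun y z hy hz hyz => ?_⟩
  refine ((hs.cover _).mp (hc.2 y z (hs.left.2.1 y hy) (hs.left.2.1 z hz) hyz)).resolve_right
    fun h => ?_
  -- `y` and `z` lie on both paths, so they are `d1` and `d2`, joined by an edge of `D'`.
  have hends : s(d1, d2) ∈ D'.edges := by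
    rcases hs.eq_or_eq_of_mem_of_mem hc.1 hy (fst_mem_support_of_mem_edges _ h) with rfl | rfl <;>
      rcases hs.eq_or_eq_of_mem_of_mem hc.1 hz (snd_mem_support_of_mem_edges _ h) with rfl | rfl
    all_goals first | exact absurd rfl hyz.ne | exact h | exact Sym2.eq_swap ▸ h
  have := hs.right.1.length_eq_one_of_mem_edges hends
  omega

lemma SplitsInto.three_le_length_of_cMajor (hs : SplitsInto G c D D') (hc : c.IsCycle)
    (hx : CMajor G c x) (hxD : ∀ y ∈ interiorSet D, ¬ G.Adj x y) : 3 ≤ D'.length := by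
  have hnbr : ∀ y ∈ c.support, G.Adj x y → y ∈ D'.support := by
    intro y hy hxy
    refine (hs.mem_or_mem hc hy).elim (fun hyD => ?_) id
    by_cases h1 : y = d1
    · exact h1 ▸ D'.start_mem_support
    by_cases h2 : y = d2
    · exact h2 ▸ D'.end_mem_support
    exact absurd hxy (hxD y ⟨hyD, h1, h2⟩)
  have hd := hs.ne hc
  have hDc : ∀ e ∈ D'.edges, e ∈ c.edges := fun e he => (hs.cover e).mpr (Or.inr he)
  by_contra hlt
  -- otherwise all neighbours of `x` on `c` lie on a three-vertex subpath of `c`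
  apply hx.2
  cases D' with
  | nil => exact absurd rfl hd
  | cons h p =>
    cases p with
    | nil =>
      cases D with
      | nil => exact absurd rfl hd
      | cons h' q =>
        rename_i w
        refine ⟨d2, d1, w, Sym2.eq_swap ▸ hDc _ (by simp), hs.left.2.2 _ (by simp),
          fun h2 => hs.disjoint s(d1, d2) (by simp) (by simp [h2]), fun y hy hxy => ?_⟩
        have : y = d1 ∨ y = d2 := by simpa using hnbr y hy hxy
        tauto
    | cons h' p =>
      cases p with
      | nil =>
        rename_i m
        refine ⟨d1, m, d2, hDc _ (by simp), hDc _ (by simp), hd, fun y hy hxy => ?_⟩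
        simpa using hnbr y hy hxy
      | cons => simp at hlt

lemma SplitsInto.odd_length_right (hs : SplitsInto G c D D') (hc : IsShortestLongOddHole G ℓ c)
    (hbase : IsBase G c x D) (hD : ℓ ≤ D.length + 2) : Odd D'.length := by
  obtain ⟨⟨hC, -, hodd⟩, hmin⟩ := hc
  obtain ⟨hx, -, hx1, hx2, hxD, -⟩ := hbase
  have hD' := hs.three_le_length_of_cMajor hC.1 hx hxD
  have hlen := hs.length_eq hC.1.isTrail
  rw [hlen, Nat.odd_add'] at hodd
  refine hodd.mpr (Nat.not_odd_iff_even.mp fun hDodd => ?_)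
  have hH := (hs.isInducedPath hC (by omega)).isInducedCycle_cons_concat (hs.ne hC.1) hx1
    hx2.symm (fun h => hx.1 (hs.left.2.1 x h)) hxD
  have := hmin x _ ⟨hH, by simp; omega, by simpa [add_assoc] using hDodd.add_even even_two⟩
  simp only [length_cons, length_concat] at this
  omega

lemma SplitsInto.add_two_le_length_right (hs : SplitsInto G c D D') (hc : IsInducedCycle G c)
    (hbase : IsBase G c x D) (hjewel : ¬ HasLongJewelOfOrderLE G ℓ (ℓ + 2)) (hD : ℓ ≤ D.length)
    (hodd : Odd D'.length) : ℓ + 2 ≤ D'.length := by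
  obtain ⟨hx, -, hx1, hx2, hxD, -⟩ := hbase
  have hD' := hs.three_le_length_of_cMajor hc.1 hx hxD
  by_contra hlt
  exact hjewel <| (hasLongJewelOfOrderLE_of_odd hs.right.1 hs.left.1 hx1 hx2
    (fun h => hx.1 (hs.left.2.1 x h)) hxD (hs.symm.anticomplete hc) (fun y hy => Or.inr hy) hD
    hodd).mono (by omega)

lemma SplitsInto.not_adj_getVert_right (hs : SplitsInto G c D D') (hc : IsInducedCycle G c)
    (hbase : IsBase G c x D) (hjewel : ¬ HasLongJewelOfOrderLE G ℓ (ℓ + 2)) (hD : ℓ ≤ D.length)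
    {k : ℕ} (hk : 0 < k) (hkD' : k < D'.length)
    (hkodd : (Odd k ∧ k + 1 ≤ ℓ) ∨ (Odd (D'.length - k) ∧ D'.length - k + 1 ≤ ℓ)) :
    ¬ G.Adj x (D'.getVert k) := by
  obtain ⟨hx, -, hx1, hx2, hxD, -⟩ := hbase
  have hxD_supp : x ∉ D.support := fun h => hx.1 (hs.left.2.1 x h)
  have hxD'_supp : x ∉ D'.support := fun h => hx.1 (hs.right.2.1 x h)
  rcases hkodd with ⟨hodd, hkℓ⟩ | ⟨hodd, hkℓ⟩
  · exact not_adj_getVert_of_odd hjewel hs.right.1 hs.left.1 hx1 hx2 hxD'_supp hxD_supp hxD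
      (hs.symm.anticomplete hc) hD hodd hkℓ hkD'
  · have := not_adj_getVert_of_odd (A := D'.reverse) (B := D.reverse) hjewel hs.right.1.reverse
      hs.left.1.reverse hx2 hx1 (by simpa using hxD'_supp) (by simpa using hxD_supp)
      (by rwa [interiorSet_reverse])
      (by simpa only [interiorSet_reverse] using hs.symm.anticomplete hc) (by simpa using hD)
      hodd hkℓ (by simp; omega)
    rwa [getVert_reverse, Nat.sub_sub_self hkD'.le] at this

lemma SplitsInto.exists_adj_getVert_right (hs : SplitsInto G c D D')
    (hc : IsShortestLongOddHole G ℓ c) (hbase : IsBase G c x D)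
    (hjewel : ¬ HasLongJewelOfOrderLE G ℓ (ℓ + 2)) (hℓ : 3 ≤ ℓ) (hD : ℓ ≤ D.length) :
    ∃ k, 2 ≤ k ∧ k + 2 ≤ D'.length ∧ G.Adj x (D'.getVert k) := by
  have hodd := hs.odd_length_right hc hbase (by omega)
  have hD' := hs.add_two_le_length_right hc.1.1 hbase hjewel hD hodd
  by_contra! hnone
  obtain ⟨⟨hC, -, -⟩, hmin⟩ := hc
  have hnone' : ∀ k, 0 < k → k < D'.length → ¬ G.Adj x (D'.getVert k) := by
    intro k hk hkD'
    by_cases hk1 : k = 1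
    · exact hs.not_adj_getVert_right hC hbase hjewel hD hk hkD' (.inl ⟨hk1 ▸ odd_one, by omega⟩)
    by_cases hk1' : k + 1 = D'.length
    · refine hs.not_adj_getVert_right hC hbase hjewel hD hk hkD' (.inr ⟨?_, by omega⟩)
      rw [show D'.length - k = 1 by omega]
      exact odd_one
    exact hnone k (by omega) (by omega)
  obtain ⟨hx, -, hx1, hx2, -, -⟩ := hbase
  have hD'ind := hs.symm.isInducedPath hC (by omega)
  obtain ⟨H, hH, hHlen⟩ := hD'ind.exists_isInducedCycle_of_adj_getVert
    (fun h => hx.1 (hs.right.2.1 x h)) (i := 0) (j := D'.length) (by omega) le_rfl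
    (by simpa using hx1) (by simpa using hx2) hnone'
  have := hmin x H ⟨hH, by omega, hHlen ▸ by simpa using hodd.add_even even_two⟩
  have := hs.length_eq hC.1.isTrail
  omega

lemma SplitsInto.add_three_le_length_right (hs : SplitsInto G c D D')
    (hc : IsShortestLongOddHole G ℓ c) (hbase : IsBase G c x D) (hcand : Candidate G ℓ)
    (hℓ : 2 ≤ ℓ) (hD : ℓ ≤ D.length) : ℓ + 3 ≤ D'.length := by
  have hodd := hs.odd_length_right hc hbase (by omega)
  have hD' := hs.add_two_le_length_right hc.1.1 hbase hcand.2.1 hD hodd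
  by_contra hlt
  have hℓodd : ℓ % 2 = 1 := by rw [Nat.odd_iff] at hodd; omega
  have hpos : ∀ k, 0 < k → k < D'.length → G.Adj x (D'.getVert k) → k = 2 ∨ k = ℓ := by
    intro k hk hkD' hxk
    by_contra! hne
    refine hs.not_adj_getVert_right hc.1.1 hbase hcand.2.1 hD hk hkD' ?_ hxk
    rcases Nat.even_or_odd k with hke | hko
    · rw [Nat.even_iff] at hke
      exact .inr ⟨Nat.odd_iff.mpr (by omega), by omega⟩
    · rw [Nat.odd_iff] at hko
      exact .inl ⟨Nat.odd_iff.mpr hko, by omega⟩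
  obtain ⟨hx, -, hx1, hx2, -, -⟩ := hbase
  -- `D'_i` and `D'_j` are consecutive neighbours of `x`: the last one up to `D'₂` and the first
  -- one from `D'_ℓ` on.
  obtain ⟨i, hi, hxi, hi2⟩ : ∃ i, (i = 0 ∨ i = 2) ∧ G.Adj x (D'.getVert i) ∧
      (i = 0 → ¬ G.Adj x (D'.getVert 2)) := by
    by_cases h2 : G.Adj x (D'.getVert 2)
    · exact ⟨2, .inr rfl, h2, by omega⟩
    · exact ⟨0, .inl rfl, by simpa using hx1, fun _ => h2⟩
  obtain ⟨j, hj, hxj, hjℓ⟩ : ∃ j, (j = ℓ ∨ j = D'.length) ∧ G.Adj x (D'.getVert j) ∧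
      (j = D'.length → ¬ G.Adj x (D'.getVert ℓ)) := by
    by_cases hℓ' : G.Adj x (D'.getVert ℓ)
    · exact ⟨ℓ, .inl rfl, hℓ', by omega⟩
    · exact ⟨D'.length, .inr rfl, by simpa using hx2, fun _ => hℓ'⟩
  obtain ⟨k, hik, hkj, hxk⟩ := hcand.exists_adj_getVert_between
    (hs.symm.isInducedPath hc.1.1 (by omega)) (fun h => hx.1 (hs.right.2.1 x h)) (i := i) (j := j)
    (by omega) (by omega) hxi hxj (Nat.odd_iff.mpr (by omega)) (by omega) (by omega)
  rcases hpos k (by omega) (by omega) hxk with rfl | rfl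
  · exact hi2 (by omega) hxk
  · exact hjℓ (by omega) hxk

end Split

end

theorem stmt_17 {V : Type*} (G : SimpleGraph V) (ℓ : ℕ) (hℓ : 5 ≤ ℓ)
    (hcand : Candidate G ℓ)
    {v : V} (c : G.Walk v v) (hc : IsShortestLongOddHole G ℓ c)
    {d1 d2 : V} (x : V) (D : G.Walk d1 d2) (hbase : IsRemoteBase G ℓ c x D)
    (D' : G.Walk d1 d2) (hD' : IsSubpath G c D')
    (hdisj : ∀ e ∈ D'.edges, e ∉ D.edges)
    (hcover : ∀ e, e ∈ c.edges ↔ e ∈ D.edges ∨ e ∈ D'.edges) :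
    Odd D'.length ∧ ℓ + 3 ≤ D'.length ∧
      ∃ w ∈ c.support, G.Adj x w ∧ w ≠ d1 ∧ w ≠ d2 ∧
        ¬ G.Adj w d1 ∧ ¬ G.Adj w d2 := by
  obtain ⟨hbase, hDlen, -⟩ := hbase
  have hs : SplitsInto G c D D' := ⟨hbase.2.1, hD', hdisj, hcover⟩
  have hD : ℓ ≤ D.length := by omega
  obtain ⟨k, hk, hkD', hxk⟩ := hs.exists_adj_getVert_right hc hbase hcand.2.1 (by omega) hD
  have hD'ind := hs.symm.isInducedPath hc.1.1 (by omega)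
  refine ⟨hs.odd_length_right hc hbase (by omega),
    hs.add_three_le_length_right hc hbase hcand (by omega) hD,
    D'.getVert k, hs.right.2.1 _ (D'.getVert_mem_support k), hxk,
    hD'ind.getVert_ne_and_not_adj_ends hk hkD'⟩

end LOH
end
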